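/- For Algorithm-1 iterates with a saddle point (φ*, q*, μ*) of L, p* = Bφ*, b* = q*, step size 0 < ρ < (2rs² + s)/(1 + rs)², B injective with closed range, and G and F uniformly convex on bounded subsets of V and H respectively: the sequences (μⁿ), (νⁿ) and (ηⁿ) converge weakly in H to a common limit μ̂ such that (φ*, q*, μ̂) is a saddle point of L. If in addition I is uniformly convex on bounded subsets of H, then (μⁿ), (νⁿ) and (ηⁿ) converge strongly to μ*. -/

import Mathlib

/-!
A Lyapunov argument. Write `Δⁿ = Bφⁿ - pⁿ`, `Eⁿ = bⁿ - qⁿ`, `k = r + 1/s`, and read (i)–(iv) as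
subgradient inclusions for `G`, `F` and `I`. For every multiplier `m` of a saddle point
`(φ*, q*, m)` the quantity
`2ρ⟪μⁿ - m, Δⁿ + Eⁿ⟫ + 2ρs‖μⁿ - m‖² + ‖pⁿ⁺¹ - Bφ*‖² + ‖bⁿ⁺¹ - q*‖² + c (‖Δⁿ‖² + ‖Eⁿ‖²)`
is nonnegative and decreases by at least a positive multiple of `‖μⁿ⁺¹ - μⁿ‖²`, of the residuals
and of the three monotonicity gaps of `∂G`, `∂F`, `∂I`; the step-size bound on `ρ` is exactly what
makes a weight `c` with `ρ/s < c < 2ρk - ρ²k²` exist. So residuals and gaps vanish, and uniform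
convexity of `G` (with `B` bounded below) and of `F` turns the vanishing gaps into `φⁿ → φ*`,
`qⁿ → q*`. Every weak cluster point of the bounded sequence `μⁿ` is then again a saddle multiplier
(subdifferential graphs are closed for strong × weak convergence, and `I` is weakly lower
semicontinuous), and `‖μⁿ - m‖` converges for each such `m`, so Opial's lemma gives weak
convergence. If `I` is uniformly convex, the vanishing `∂I`-gap gives `μⁿ → μ*` outright.
-/

open RealInnerProductSpace Filter Topology

/-- `u` is a subgradient of `J` at `x`. -/
def IsSubgradient {E : Type*} [NormedAddCommGroup E] [InnerProductSpace ℝ E]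
    (J : E → ℝ) (x u : E) : Prop :=
  ∀ z, J z ≥ J x + ⟪u, z - x⟫

/-- `J` is uniformly convex on the set `U`. -/
def UniformlyConvexOnSet {E : Type*} [NormedAddCommGroup E] [InnerProductSpace ℝ E]
    (J : E → ℝ) (U : Set E) : Prop :=
  ∃ Ψ : ℝ → ℝ, StrictMonoOn Ψ (Set.Ici 0) ∧ Ψ 0 = 0 ∧ (∀ t, 0 ≤ t → 0 ≤ Ψ t) ∧
    ∀ x ∈ U, ∀ y ∈ U, ∀ u v : E, IsSubgradient J x u → IsSubgradient J y v →
      ⟪u - v, x - y⟫ ≥ Ψ ‖x - y‖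

/-- `J` is uniformly convex on every bounded subset of its domain. -/
def UniformlyConvexOnBoundedSets {E : Type*} [NormedAddCommGroup E] [InnerProductSpace ℝ E]
    (J : E → ℝ) : Prop :=
  ∀ U : Set E, Bornology.IsBounded U → UniformlyConvexOnSet J U

open scoped InnerProduct
open Asymptotics

section Subgradient

variable {E : Type*} [NormedAddCommGroup E] [InnerProductSpace ℝ E] {J : E → ℝ}

theorem IsSubgradient.inner_sub_nonneg {x y u v : E} (hu : IsSubgradient J x u)
    (hv : IsSubgradient J y v) : 0 ≤ ⟪u - v, x - y⟫ := by
  have h : ⟪u - v, x - y⟫ = -⟪u, y - x⟫ - ⟪v, x - y⟫ := by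
    rw [inner_sub_left, ← inner_neg_right, neg_sub]
  linarith [hu y, hv x]

theorem StrictMonoOn.tendsto_zero_of_le {ι : Type*} {l : Filter ι} {Ψ : ℝ → ℝ}
    (hΨ : StrictMonoOn Ψ (Set.Ici 0)) (hΨ0 : Ψ 0 = 0) {t a : ι → ℝ} (ht : ∀ᶠ i in l, 0 ≤ t i)
    (hta : ∀ᶠ i in l, Ψ (t i) ≤ a i) (ha : Tendsto a l (𝓝 0)) : Tendsto t l (𝓝 0) := by
  refine tendsto_order.2 ⟨fun ε hε => ht.mono fun i hi => hε.trans_le hi, fun ε hε => ?_⟩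
  have hΨε : 0 < Ψ ε := hΨ0 ▸ hΨ Set.self_mem_Ici hε.le hε
  filter_upwards [ht, hta, ha.eventually (gt_mem_nhds hΨε)] with i hti hi hai
  exact (hΨ.lt_iff_lt hti hε.le).1 (hi.trans_lt hai)

theorem UniformlyConvexOnBoundedSets.tendsto_of_inner_sub_sub_tendsto_zero {ι : Type*}
    {l : Filter ι} (hJ : UniformlyConvexOnBoundedSets J) {x u : ι → E} {x₀ u₀ : E}
    (hx : x =O[l] fun _ => (1 : ℝ)) (hu : ∀ᶠ i in l, IsSubgradient J (x i) (u i))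
    (hu₀ : IsSubgradient J x₀ u₀) (h : Tendsto (fun i => ⟪u i - u₀, x i - x₀⟫) l (𝓝 0)) :
    Tendsto x l (𝓝 x₀) := by
  obtain ⟨R, hR⟩ := (isBigO_one_iff ℝ).1 hx
  obtain ⟨Ψ, hΨ, hΨ0, -, hΨJ⟩ :=
    hJ (insert x₀ (Metric.closedBall 0 R)) (Metric.isBounded_closedBall.insert x₀)
  rw [tendsto_iff_norm_sub_tendsto_zero]
  refine hΨ.tendsto_zero_of_le hΨ0 (.of_forall fun i => norm_nonneg _) ?_ h
  filter_upwards [eventually_map.1 hR, hu] with i hi hui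
  exact hΨJ _ (Set.mem_insert_of_mem _ (mem_closedBall_zero_iff.2 hi)) _ (Set.mem_insert _ _)
    _ _ hui hu₀

end Subgradient

section Weak

variable {ι E F : Type*} [NormedAddCommGroup E] [InnerProductSpace ℝ E]
  [NormedAddCommGroup F] [InnerProductSpace ℝ F] {l : Filter ι}

def WeakTendsto (x : ι → E) (l : Filter ι) (z : E) : Prop :=
  ∀ v, Tendsto (fun i => ⟪x i, v⟫) l (𝓝 ⟪z, v⟫)

theorem Filter.Tendsto.weakTendsto {x : ι → E} {z : E} (h : Tendsto x l (𝓝 z)) :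
    WeakTendsto x l z :=
  fun _ => h.inner tendsto_const_nhds

theorem WeakTendsto.add_tendsto {x y : ι → E} {z w : E} (hx : WeakTendsto x l z)
    (hy : Tendsto y l (𝓝 w)) : WeakTendsto (fun i => x i + y i) l (z + w) := fun v => by
  simpa only [inner_add_left] using (hx v).add (hy.weakTendsto v)

theorem WeakTendsto.map [CompleteSpace E] [CompleteSpace F] (T : E →L[ℝ] F) {x : ι → E} {z : E}
    (hx : WeakTendsto x l z) : WeakTendsto (fun i => T (x i)) l (T z) := fun v => by
  simpa only [ContinuousLinearMap.adjoint_inner_right] using hx ((T†) v)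

theorem tendsto_inner_zero_of_isBigO_one {x y : ι → E} (hx : x =O[l] fun _ => (1 : ℝ))
    (hy : Tendsto y l (𝓝 0)) : Tendsto (fun i => ⟪x i, y i⟫) l (𝓝 0) :=
  hy.op_zero_isBoundedUnder_le ((isBigO_one_iff ℝ).1 hx) (fun a b => ⟪b, a⟫)
    fun a b => (norm_inner_le_norm b a).trans_eq (mul_comm _ _)

theorem WeakTendsto.tendsto_inner {x y : ι → E} {z w : E} (hx : WeakTendsto x l z)
    (hxb : x =O[l] fun _ => (1 : ℝ)) (hy : Tendsto y l (𝓝 w)) :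
    Tendsto (fun i => ⟪x i, y i⟫) l (𝓝 ⟪z, w⟫) := by
  simpa [inner_sub_right] using
    (hx w).add (tendsto_inner_zero_of_isBigO_one hxb (tendsto_sub_nhds_zero_iff.2 hy))

theorem Ultrafilter.exists_weakTendsto [CompleteSpace E] (U : Ultrafilter ι) {x : ι → E}
    (hx : x =O[U] fun _ => (1 : ℝ)) : ∃ z, WeakTendsto x U z := by
  obtain ⟨R, hR⟩ := (isBigO_one_iff ℝ).1 hx
  let y : ι → WeakDual ℝ E := fun i => StrongDual.toWeakDual (InnerProductSpace.toDual ℝ E (x i))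
  obtain ⟨f, -, hf⟩ := (WeakDual.isCompact_closedBall (𝕜 := ℝ) (E := E) 0 R).ultrafilter_le_nhds
    (U.map y) (by
      rw [le_principal_iff, Ultrafilter.coe_map, Filter.mem_map]
      filter_upwards [eventually_map.1 hR] with i hi
      simpa [y] using hi)
  refine ⟨(InnerProductSpace.toDual ℝ E).symm (WeakDual.toStrongDual f), fun v => ?_⟩
  have := ((WeakDual.eval_continuous v).tendsto f).comp hf
  simpa [y, Function.comp_def, real_inner_comm] using this

theorem Convex.mem_of_weakTendsto [CompleteSpace E] {C : Set E} (hC : Convex ℝ C)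
    (hCcl : IsClosed C) [l.NeBot] {x : ι → E} {z : E} (hx : WeakTendsto x l z)
    (hmem : ∀ᶠ i in l, x i ∈ C) : z ∈ C := by
  suffices toWeakSpace ℝ E z ∈ toWeakSpace ℝ E '' closure C by
    simpa [hCcl.closure_eq] using this
  rw [hC.toWeakSpace_closure ℝ]
  refine mem_closure_of_tendsto ?_ (hmem.mono fun i hi => Set.mem_image_of_mem _ hi)
  refine (WeakBilin.tendsto_iff_forall_eval_tendsto (B := (topDualPairing ℝ E).flip) ?_).2 ?_
  · intro a b hab
    exact ext_inner_right ℝ fun v => by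
      simpa [real_inner_comm] using LinearMap.congr_fun hab (InnerProductSpace.toDual ℝ E v)
  · intro f
    obtain ⟨a, rfl⟩ := (InnerProductSpace.toDual ℝ E).surjective f
    exact (by simpa [real_inner_comm] using hx a : Tendsto (fun i => ⟪a, x i⟫) l (𝓝 ⟪a, z⟫))

theorem ConvexOn.le_of_weakTendsto [CompleteSpace E] {J : E → ℝ} (hJ : ConvexOn ℝ Set.univ J)
    (hJlsc : LowerSemicontinuous J) [l.NeBot] {x : ι → E} {z : E} (hx : WeakTendsto x l z)
    {g : ι → ℝ} {a : ℝ} (hg : Tendsto g l (𝓝 a)) (hle : ∀ᶠ i in l, J (x i) ≤ g i) : J z ≤ a := by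
  refine le_of_forall_pos_le_add fun ε hε => ?_
  have hC : Convex ℝ {y | J y ≤ a + ε} := by simpa using hJ.convex_le (a + ε)
  refine hC.mem_of_weakTendsto (hJlsc.isClosed_preimage (a + ε)) hx ?_
  filter_upwards [hle, hg.eventually (gt_mem_nhds (lt_add_of_pos_right a hε))] with i h1 h2
  exact h1.trans h2.le

end Weak

section Closedness

variable {ι E : Type*} [NormedAddCommGroup E] [InnerProductSpace ℝ E] {l : Filter ι} [l.NeBot]
  {J : E → ℝ} {x u : ι → E} {x₀ u₀ : E}

theorem IsSubgradient.of_tendsto_of_weakTendsto {u' : E}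
    (hsub : ∀ᶠ i in l, IsSubgradient J (x i) (u i)) (h₀ : IsSubgradient J x₀ u')
    (hx : Tendsto x l (𝓝 x₀)) (hu : WeakTendsto u l u₀)
    (hub : u =O[l] fun _ => (1 : ℝ)) : IsSubgradient J x₀ u₀ := by
  intro z
  have h1 : Tendsto (fun i => ⟪u', x i - x₀⟫) l (𝓝 0) := by
    simpa using tendsto_const_nhds.inner (tendsto_sub_nhds_zero_iff.2 hx)
  have h2 := hu.tendsto_inner hub (tendsto_const_nhds (x := z) |>.sub hx)
  have h3 := (h1.const_add (J x₀)).add h2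
  rw [add_zero] at h3
  refine le_of_tendsto h3 ?_
  filter_upwards [hsub] with i hi
  linarith [hi z, h₀ (x i)]

theorem ConvexOn.isSubgradient_of_weakTendsto [CompleteSpace E] (hJ : ConvexOn ℝ Set.univ J)
    (hJlsc : LowerSemicontinuous J) (hsub : ∀ᶠ i in l, IsSubgradient J (x i) (u i))
    (hx : WeakTendsto x l x₀) (hxb : x =O[l] fun _ => (1 : ℝ))
    (hu : Tendsto u l (𝓝 u₀)) : IsSubgradient J x₀ u₀ := by
  intro z
  have h : Tendsto (fun i => J z - (⟪u i, z⟫ - ⟪x i, u i⟫)) l (𝓝 (J z - (⟪u₀, z⟫ - ⟪x₀, u₀⟫))) :=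
    tendsto_const_nhds.sub ((hu.inner tendsto_const_nhds).sub (hx.tendsto_inner hxb hu))
  have := hJ.le_of_weakTendsto hJlsc hx h <| hsub.mono fun i hi => by
    linarith [hi z, inner_sub_right (𝕜 := ℝ) (u i) z (x i), real_inner_comm (x i) (u i)]
  linarith [inner_sub_right (𝕜 := ℝ) u₀ z x₀, real_inner_comm x₀ u₀]

end Closedness

/-- Opial's lemma. -/
theorem exists_weakTendsto_of_tendsto_norm_sub {E : Type*} [NormedAddCommGroup E]
    [InnerProductSpace ℝ E] [CompleteSpace E] {x : ℕ → E} {S : Set E}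
    (hx : x =O[atTop] fun _ => (1 : ℝ))
    (hS : ∀ z ∈ S, ∃ a, Tendsto (fun n => ‖x n - z‖) atTop (𝓝 a))
    (hcluster : ∀ (U : Ultrafilter ℕ) (z : E), (U : Filter ℕ) ≤ atTop → WeakTendsto x U z → z ∈ S) :
    ∃ z ∈ S, WeakTendsto x atTop z := by
  have hlim : ∀ U : Ultrafilter ℕ, (U : Filter ℕ) ≤ atTop → ∃ z ∈ S, WeakTendsto x U z := by
    intro U hU
    obtain ⟨z, hz⟩ := U.exists_weakTendsto (hx.mono hU)
    exact ⟨z, hcluster U z hU hz, hz⟩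
  have huniq : ∀ U₁ U₂ : Ultrafilter ℕ, (U₁ : Filter ℕ) ≤ atTop → (U₂ : Filter ℕ) ≤ atTop →
      ∀ z₁ z₂ : E, z₁ ∈ S → z₂ ∈ S → WeakTendsto x U₁ z₁ → WeakTendsto x U₂ z₂ → z₁ = z₂ := by
    intro U₁ U₂ hU₁ hU₂ z₁ z₂ hz₁ hz₂ h₁ h₂
    obtain ⟨a₁, ha₁⟩ := hS z₁ hz₁
    obtain ⟨a₂, ha₂⟩ := hS z₂ hz₂
    -- `⟪x n, z₁ - z₂⟫` is determined by the two distances, so it has a limit along `atTop`.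
    have key : Tendsto (fun n => ⟪x n, z₁ - z₂⟫) atTop
        (𝓝 ((a₂ ^ 2 - a₁ ^ 2 + ‖z₁‖ ^ 2 - ‖z₂‖ ^ 2) / 2)) := by
      refine (((ha₂.pow 2).sub (ha₁.pow 2)).add_const _ |>.sub_const _ |>.div_const 2).congr
        fun n => ?_
      rw [norm_sub_sq_real, norm_sub_sq_real, inner_sub_right]
      ring
    have e₁ := tendsto_nhds_unique (key.mono_left hU₁) (h₁ (z₁ - z₂))
    have e₂ := tendsto_nhds_unique (key.mono_left hU₂) (h₂ (z₁ - z₂))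
    rw [← sub_eq_zero, ← inner_self_eq_zero (𝕜 := ℝ), inner_sub_left]
    linarith
  obtain ⟨z, hzS, hz⟩ := hlim (Ultrafilter.of atTop) (Ultrafilter.of_le atTop)
  refine ⟨z, hzS, fun v => tendsto_iff_ultrafilter _ _ _ |>.2 fun U hU => ?_⟩
  obtain ⟨z', hz'S, hz'⟩ := hlim U hU
  rw [huniq U _ hU (Ultrafilter.of_le atTop) z' z hz'S hzS hz' hz] at hz'
  exact hz' v

theorem exists_tendsto_and_tendsto_zero_of_add_le {Y w : ℕ → ℝ} (hY : ∀ n, 0 ≤ Y n)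
    (hw : ∀ n, 0 ≤ w n) (h : ∀ n, Y (n + 1) + w n ≤ Y n) :
    (∃ a, Tendsto Y atTop (𝓝 a)) ∧ Tendsto w atTop (𝓝 0) := by
  have hanti : Antitone Y := antitone_nat_of_succ_le fun n => by linarith [h n, hw n]
  obtain ⟨a, ha⟩ : ∃ a, Tendsto Y atTop (𝓝 a) :=
    ⟨_, tendsto_atTop_ciInf hanti ⟨0, Set.forall_mem_range.2 hY⟩⟩
  have hdiff : Tendsto (fun n => Y n - Y (n + 1)) atTop (𝓝 0) := by
    simpa using ha.sub (ha.comp (tendsto_add_atTop_nat 1))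
  exact ⟨⟨a, ha⟩, squeeze_zero hw (fun n => by linarith [h n]) hdiff⟩

theorem tendsto_zero_of_tendsto_norm_sq {ι E : Type*} [SeminormedAddCommGroup E] {l : Filter ι}
    {x : ι → E} (h : Tendsto (fun i => ‖x i‖ ^ 2) l (𝓝 0)) : Tendsto x l (𝓝 0) :=
  tendsto_zero_iff_norm_tendsto_zero.2 <| by simpa using h.sqrt

theorem isBigO_one_of_norm_sub_sq_le {ι E : Type*} [SeminormedAddCommGroup E] {l : Filter ι}
    {x : ι → E} (y : E) {R : ℝ} (h : ∀ᶠ i in l, ‖x i - y‖ ^ 2 ≤ R) :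
    x =O[l] fun _ => (1 : ℝ) := by
  refine (isBigO_one_iff ℝ).2 ⟨R + 1 + ‖y‖, eventually_map.2 (h.mono fun i hi => ?_)⟩
  nlinarith [norm_sub_norm_le (x i) y, sq_nonneg (‖x i - y‖ - 1), norm_nonneg (x i - y)]

theorem two_mul_inner_add_le {E : Type*} [NormedAddCommGroup E] [InnerProductSpace ℝ E]
    (ρ : ℝ) {c : ℝ} (hc : 0 < c) (u w₁ w₂ : E) :
    2 * ρ * ⟪u, w₁ + w₂⟫ ≤ 2 * ρ ^ 2 / c * ‖u‖ ^ 2 + c * (‖w₁‖ ^ 2 + ‖w₂‖ ^ 2) := by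
  have hsq : 0 ≤ ‖(2 * ρ / c) • u - (w₁ + w₂)‖ ^ 2 := sq_nonneg _
  rw [norm_sub_sq_real, norm_smul, real_inner_smul_left, mul_pow, Real.norm_eq_abs, sq_abs] at hsq
  have hpar := parallelogram_law_with_norm ℝ w₁ w₂
  have key : 2 * ρ * ⟪u, w₁ + w₂⟫ ≤ 2 * ρ ^ 2 / c * ‖u‖ ^ 2 + c / 2 * ‖w₁ + w₂‖ ^ 2 := by
    have := mul_le_mul_of_nonneg_left hsq (by positivity : 0 ≤ c / 2)
    field_simp at this ⊢
    nlinarith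
  nlinarith [sq_nonneg ‖w₁ - w₂‖]

/-- The one-step identity behind `Algorithm1Run.energy_succ_add_dissipation_le`: `a, a'` are
`μⁿ⁺¹ - m, μⁿ - m`; `d, e` and `d', e'` the residuals at steps `n + 1` and `n`; `P, C` are
`pⁿ⁺¹ - Bφ*, bⁿ⁺¹ - q*`. -/
theorem inner_energy_identity {E : Type*} [NormedAddCommGroup E] [InnerProductSpace ℝ E]
    (ρ s k : ℝ) (a a' d e d' e' P C : E) :
    (2 * ρ * ⟪a, d + e⟫ + 2 * ρ * s * ‖a‖ ^ 2 + ‖P + (ρ * k) • d‖ ^ 2 + ‖C - (ρ * k) • e‖ ^ 2)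
      - (2 * ρ * ⟪a', d' + e'⟫ + 2 * ρ * s * ‖a'‖ ^ 2 + ‖P‖ ^ 2 + ‖C‖ ^ 2)
      = 2 * ρ * ⟪a - a', d' + e'⟫ - 2 * ρ * s * ‖a - a'‖ ^ 2
        - (2 * ρ * k - ρ ^ 2 * k ^ 2) * (‖d‖ ^ 2 + ‖e‖ ^ 2)
        - 2 * ρ * (⟪-(a + k • d), d + P⟫ + ⟪a + k • e, C - e⟫
          + ⟪P - C + (d' + e') - (2 * s) • (a - a'), a⟫) := by
  simp only [← real_inner_self_eq_norm_sq, inner_add_left, inner_add_right, inner_sub_left,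
    inner_sub_right, inner_neg_left, real_inner_smul_right, real_inner_comm]
  ring

section SaddlePoint

variable {V H : Type*} [NormedAddCommGroup V] [InnerProductSpace ℝ V] [CompleteSpace V]
  [NormedAddCommGroup H] [InnerProductSpace ℝ H] [CompleteSpace H]

def IsSaddleMultiplier (B : V →L[ℝ] H) (F : H → ℝ) (G : V → ℝ) (I : H → ℝ) (φs : V) (qs m : H) :
    Prop :=
  IsSubgradient G φs (-(B†) m) ∧ IsSubgradient F qs m ∧ IsSubgradient I m (B φs - qs)

theorem isSaddleMultiplier_iff {B : V →L[ℝ] H} {F : H → ℝ} {G : V → ℝ} {I : H → ℝ}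
    {L : V → H → H → ℝ} (hL : ∀ φ q μ, L φ q μ = F q + G φ - I μ + ⟪μ, B φ - q⟫)
    {φs : V} {qs m : H} :
    (∀ φ q μ, L φs qs μ ≤ L φs qs m ∧ L φs qs m ≤ L φ q m) ↔
      IsSaddleMultiplier B F G I φs qs m := by
  simp only [IsSaddleMultiplier, IsSubgradient, hL, inner_neg_left,
    ContinuousLinearMap.adjoint_inner_left, inner_sub_left, inner_sub_right]
  refine ⟨fun h => ⟨fun φ => ?_, fun q => ?_, fun μ => ?_⟩, fun ⟨hG, hF, hI⟩ φ q μ => ⟨?_, ?_⟩⟩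
  · linarith [(h φ qs m).2]
  · linarith [(h φs q m).2]
  · linarith [(h φs qs μ).1, real_inner_comm μ (B φs), real_inner_comm μ qs,
      real_inner_comm m (B φs), real_inner_comm m qs]
  · linarith [hI μ, real_inner_comm μ (B φs), real_inner_comm μ qs,
      real_inner_comm m (B φs), real_inner_comm m qs]
  · linarith [hG φ, hF q]

end SaddlePoint

theorem exists_weight_between {r s ρ : ℝ} (hs : 0 < s) (hρ : 0 < ρ)
    (hρ2 : ρ < (2 * r * s ^ 2 + s) / (1 + r * s) ^ 2) :
    ∃ c, ρ < c * s ∧ c < 2 * ρ * (r + 1 / s) - ρ ^ 2 * (r + 1 / s) ^ 2 := by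
  have hpos : 0 < (1 + r * s) ^ 2 := by
    rcases (sq_nonneg (1 + r * s)).lt_or_eq with h | h
    · exact h
    · rw [← h, div_zero] at hρ2
      linarith
  have h1 := (lt_div_iff₀ hpos).1 hρ2
  have h2 : ρ / s < 2 * ρ * (r + 1 / s) - ρ ^ 2 * (r + 1 / s) ^ 2 := by
    rw [div_lt_iff₀ hs]
    have e : (2 * ρ * (r + 1 / s) - ρ ^ 2 * (r + 1 / s) ^ 2) * s
        = ρ * ((2 * r * s ^ 2 + 2 * s) - ρ * (1 + r * s) ^ 2) / s := by
      field_simp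
      ring
    rw [e, lt_div_iff₀ hs]
    nlinarith [mul_pos hρ (sub_pos.2 h1)]
  obtain ⟨c, hc1, hc2⟩ := exists_between h2
  exact ⟨c, (div_lt_iff₀ hs).1 hc1, hc2⟩

/-- Algorithm 1 with the iterates re-indexed from `0` (field `n` is the paper's `n + 1`), the
auxiliary multipliers `ν, η` eliminated through (ii), `k = r + 1/s`, and a constant `c` weighting
the residuals in the Lyapunov function `energy`. -/
structure Algorithm1Run (V H : Type*) [NormedAddCommGroup V] [InnerProductSpace ℝ V]
    [CompleteSpace V] [NormedAddCommGroup H] [InnerProductSpace ℝ H] [CompleteSpace H] where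
  B : V →L[ℝ] H
  F : H → ℝ
  G : V → ℝ
  I : H → ℝ
  s : ℝ
  k : ℝ
  ρ : ℝ
  c : ℝ
  φ : ℕ → V
  q : ℕ → H
  μ : ℕ → H
  p : ℕ → H
  b : ℕ → H
  s_pos : 0 < s
  ρ_pos : 0 < ρ
  ρ_lt_c_mul_s : ρ < c * s
  c_lt : c < 2 * ρ * k - ρ ^ 2 * k ^ 2
  isSubgradient_G : ∀ n, IsSubgradient G (φ n) (-(B†) (μ n + k • (B (φ n) - p n)))
  isSubgradient_F : ∀ n, IsSubgradient F (q n) (μ n + k • (b n - q n))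
  isSubgradient_I : ∀ n, IsSubgradient I (μ (n + 1))
    (p (n + 1) - b (n + 1) + (B (φ n) - p n) + (b n - q n) - (2 * s) • (μ (n + 1) - μ n))
  p_succ : ∀ n, p (n + 1) = p n + (ρ * k) • (B (φ n) - p n)
  b_succ : ∀ n, b (n + 1) = b n - (ρ * k) • (b n - q n)

namespace Algorithm1Run

variable {V H : Type*} [NormedAddCommGroup V] [InnerProductSpace ℝ V] [CompleteSpace V]
  [NormedAddCommGroup H] [InnerProductSpace ℝ H] [CompleteSpace H] (A : Algorithm1Run V H)

noncomputable section

def resP (n : ℕ) : H := A.B (A.φ n) - A.p n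

def resB (n : ℕ) : H := A.b n - A.q n

def gradG (n : ℕ) : V := -(A.B†) (A.μ n + A.k • A.resP n)

def gradF (n : ℕ) : H := A.μ n + A.k • A.resB n

def gradI (n : ℕ) : H :=
  A.p (n + 1) - A.b (n + 1) + A.resP n + A.resB n - (2 * A.s) • (A.μ (n + 1) - A.μ n)

def gapG (φs : V) (m : H) (n : ℕ) : ℝ := ⟪A.gradG n - -(A.B†) m, A.φ n - φs⟫

def gapF (qs m : H) (n : ℕ) : ℝ := ⟪A.gradF n - m, A.q n - qs⟫

def gapI (φs : V) (qs m : H) (n : ℕ) : ℝ := ⟪A.gradI n - (A.B φs - qs), A.μ (n + 1) - m⟫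

def energy (φs : V) (qs m : H) (n : ℕ) : ℝ :=
  2 * A.ρ * ⟪A.μ n - m, A.resP n + A.resB n⟫ + 2 * A.ρ * A.s * ‖A.μ n - m‖ ^ 2
    + ‖A.p (n + 1) - A.B φs‖ ^ 2 + ‖A.b (n + 1) - qs‖ ^ 2
    + A.c * (‖A.resP n‖ ^ 2 + ‖A.resB n‖ ^ 2)

def dissipation (φs : V) (qs m : H) (n : ℕ) : ℝ :=
  (2 * A.ρ * A.s - 2 * A.ρ ^ 2 / A.c) * ‖A.μ (n + 1) - A.μ n‖ ^ 2
    + (2 * A.ρ * A.k - A.ρ ^ 2 * A.k ^ 2 - A.c) * (‖A.resP (n + 1)‖ ^ 2 + ‖A.resB (n + 1)‖ ^ 2)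
    + 2 * A.ρ * (A.gapG φs m (n + 1) + A.gapF qs m (n + 1) + A.gapI φs qs m n)

end

variable {φs : V} {qs : H}

theorem c_pos : 0 < A.c :=
  pos_of_mul_pos_left (A.ρ_pos.trans A.ρ_lt_c_mul_s) A.s_pos.le

theorem coeff_μ_pos : 0 < 2 * A.ρ * A.s - 2 * A.ρ ^ 2 / A.c := by
  have := A.c_pos
  have h : A.ρ / A.c < A.s := (div_lt_iff₀ this).2 (by linarith [A.ρ_lt_c_mul_s])
  have : 2 * A.ρ ^ 2 / A.c = 2 * A.ρ * (A.ρ / A.c) := by ring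
  nlinarith [A.ρ_pos]

theorem coeff_res_pos : 0 < 2 * A.ρ * A.k - A.ρ ^ 2 * A.k ^ 2 - A.c := sub_pos.2 A.c_lt

theorem energy_succ_add_dissipation_le (m : H) (n : ℕ) :
    A.energy φs qs m (n + 1) + A.dissipation φs qs m n ≤ A.energy φs qs m n := by
  have hp : A.p (n + 1 + 1) - A.B φs = (A.p (n + 1) - A.B φs) + (A.ρ * A.k) • A.resP (n + 1) := by
    rw [A.p_succ, resP]; abel
  have hb : A.b (n + 1 + 1) - qs = (A.b (n + 1) - qs) - (A.ρ * A.k) • A.resB (n + 1) := by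
    rw [A.b_succ, resB]; abel
  have hG : A.gapG φs m (n + 1) = ⟪-(A.μ (n + 1) - m + A.k • A.resP (n + 1)),
      A.resP (n + 1) + (A.p (n + 1) - A.B φs)⟫ := by
    have hu : A.gradG (n + 1) - -(A.B†) m = (A.B†) (m - (A.μ (n + 1) + A.k • A.resP (n + 1))) := by
      rw [gradG, map_sub]; abel
    rw [gapG, hu, ContinuousLinearMap.adjoint_inner_left, map_sub, resP]
    congr 1 <;> abel
  have hF : A.gapF qs m (n + 1) = ⟪A.μ (n + 1) - m + A.k • A.resB (n + 1),
      (A.b (n + 1) - qs) - A.resB (n + 1)⟫ := by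
    rw [gapF, gradF, resB]
    congr 1 <;> abel
  have hI : A.gapI φs qs m n = ⟪(A.p (n + 1) - A.B φs) - (A.b (n + 1) - qs)
      + (A.resP n + A.resB n) - (2 * A.s) • (A.μ (n + 1) - A.μ n), A.μ (n + 1) - m⟫ := by
    rw [gapI, gradI]
    congr 1; abel
  have hid := inner_energy_identity A.ρ A.s A.k (A.μ (n + 1) - m) (A.μ n - m) (A.resP (n + 1))
    (A.resB (n + 1)) (A.resP n) (A.resB n) (A.p (n + 1) - A.B φs) (A.b (n + 1) - qs)
  rw [sub_sub_sub_cancel_right] at hid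
  have hY := two_mul_inner_add_le A.ρ A.c_pos (A.μ (n + 1) - A.μ n) (A.resP n) (A.resB n)
  rw [energy, energy, dissipation, hp, hb, hG, hF, hI]
  linarith

theorem energy_lower_bound (m : H) (n : ℕ) :
    (2 * A.ρ * A.s - 2 * A.ρ ^ 2 / A.c) * ‖A.μ n - m‖ ^ 2 + ‖A.p (n + 1) - A.B φs‖ ^ 2
      + ‖A.b (n + 1) - qs‖ ^ 2 ≤ A.energy φs qs m n := by
  have hY := two_mul_inner_add_le A.ρ A.c_pos (-(A.μ n - m)) (A.resP n) (A.resB n)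
  rw [inner_neg_left, norm_neg] at hY
  rw [energy]
  linarith

theorem energy_nonneg (m : H) (n : ℕ) : 0 ≤ A.energy φs qs m n := by
  have := A.energy_lower_bound (φs := φs) (qs := qs) m n
  have := A.coeff_μ_pos
  nlinarith [sq_nonneg ‖A.μ n - m‖, sq_nonneg ‖A.p (n + 1) - A.B φs‖,
    sq_nonneg ‖A.b (n + 1) - qs‖]

section SaddleMultiplier

variable {m : H}

theorem gapG_nonneg (hm : IsSaddleMultiplier A.B A.F A.G A.I φs qs m) (n : ℕ) :
    0 ≤ A.gapG φs m n :=
  (A.isSubgradient_G n).inner_sub_nonneg hm.1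

theorem gapF_nonneg (hm : IsSaddleMultiplier A.B A.F A.G A.I φs qs m) (n : ℕ) :
    0 ≤ A.gapF qs m n :=
  (A.isSubgradient_F n).inner_sub_nonneg hm.2.1

theorem gapI_nonneg (hm : IsSaddleMultiplier A.B A.F A.G A.I φs qs m) (n : ℕ) :
    0 ≤ A.gapI φs qs m n :=
  (A.isSubgradient_I n).inner_sub_nonneg hm.2.2

theorem dissipation_nonneg (hm : IsSaddleMultiplier A.B A.F A.G A.I φs qs m) (n : ℕ) :
    0 ≤ A.dissipation φs qs m n := by
  have := A.coeff_μ_pos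
  have := A.coeff_res_pos
  have := A.ρ_pos
  have := A.gapG_nonneg hm (n + 1)
  have := A.gapF_nonneg hm (n + 1)
  have := A.gapI_nonneg hm n
  rw [dissipation]
  positivity

theorem tendsto_energy_and_dissipation (hm : IsSaddleMultiplier A.B A.F A.G A.I φs qs m) :
    (∃ a, Tendsto (A.energy φs qs m) atTop (𝓝 a)) ∧
      Tendsto (A.dissipation φs qs m) atTop (𝓝 0) :=
  exists_tendsto_and_tendsto_zero_of_add_le (A.energy_nonneg m) (A.dissipation_nonneg hm)
    (A.energy_succ_add_dissipation_le m)

end SaddleMultiplier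

section Convergence

variable {μs : H}

theorem tendsto_dissipation_summands (hsad : IsSaddleMultiplier A.B A.F A.G A.I φs qs μs) :
    Tendsto (fun n => ‖A.μ (n + 1) - A.μ n‖ ^ 2) atTop (𝓝 0) ∧
    Tendsto (fun n => ‖A.resP (n + 1)‖ ^ 2 + ‖A.resB (n + 1)‖ ^ 2) atTop (𝓝 0) ∧
    Tendsto (fun n => A.gapG φs μs (n + 1)) atTop (𝓝 0) ∧
    Tendsto (fun n => A.gapF qs μs (n + 1)) atTop (𝓝 0) ∧
    Tendsto (A.gapI φs qs μs) atTop (𝓝 0) := by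
  have hD := (A.tendsto_energy_and_dissipation hsad).2
  have key : ∀ {f : ℕ → ℝ} {a : ℝ}, 0 < a → (∀ n, 0 ≤ f n) →
      (∀ n, a * f n ≤ A.dissipation φs qs μs n) → Tendsto f atTop (𝓝 0) := fun ha hf hfD =>
    squeeze_zero hf (fun n => (le_div_iff₀' ha).2 (hfD n)) (by simpa using hD.div_const _)
  have hκ := A.coeff_μ_pos
  have hβ := A.coeff_res_pos
  have hρ : 0 < 2 * A.ρ := by linarith [A.ρ_pos]
  have hG := A.gapG_nonneg hsad
  have hF := A.gapF_nonneg hsad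
  have hI := A.gapI_nonneg hsad
  have hsum : ∀ n, 0 ≤ ‖A.resP (n + 1)‖ ^ 2 + ‖A.resB (n + 1)‖ ^ 2 := fun n => by positivity
  refine ⟨key hκ (fun n => sq_nonneg _) fun n => ?_, key hβ hsum fun n => ?_,
    key hρ (fun n => hG _) fun n => ?_, key hρ (fun n => hF _) fun n => ?_,
    key hρ hI fun n => ?_⟩ <;>
  · rw [dissipation]
    nlinarith [mul_nonneg hκ.le (sq_nonneg ‖A.μ (n + 1) - A.μ n‖), mul_nonneg hβ.le (hsum n),
      mul_nonneg hρ.le (hG (n + 1)), mul_nonneg hρ.le (hF (n + 1)), mul_nonneg hρ.le (hI n)]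

theorem tendsto_resP (hsad : IsSaddleMultiplier A.B A.F A.G A.I φs qs μs) :
    Tendsto A.resP atTop (𝓝 0) :=
  (tendsto_add_atTop_iff_nat 1).1 <| tendsto_zero_of_tendsto_norm_sq <|
    squeeze_zero (fun _ => sq_nonneg _) (fun _ => le_add_of_nonneg_right (sq_nonneg _))
      (A.tendsto_dissipation_summands hsad).2.1

theorem tendsto_resB (hsad : IsSaddleMultiplier A.B A.F A.G A.I φs qs μs) :
    Tendsto A.resB atTop (𝓝 0) :=
  (tendsto_add_atTop_iff_nat 1).1 <| tendsto_zero_of_tendsto_norm_sq <|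
    squeeze_zero (fun _ => sq_nonneg _) (fun _ => le_add_of_nonneg_left (sq_nonneg _))
      (A.tendsto_dissipation_summands hsad).2.1

theorem tendsto_μ_succ_sub (hsad : IsSaddleMultiplier A.B A.F A.G A.I φs qs μs) :
    Tendsto (fun n => A.μ (n + 1) - A.μ n) atTop (𝓝 0) :=
  tendsto_zero_of_tendsto_norm_sq (A.tendsto_dissipation_summands hsad).1

theorem exists_bound_of_energy (hsad : IsSaddleMultiplier A.B A.F A.G A.I φs qs μs) :
    ∃ R, ∀ᶠ n in atTop, (2 * A.ρ * A.s - 2 * A.ρ ^ 2 / A.c) * ‖A.μ n - μs‖ ^ 2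
      + ‖A.p (n + 1) - A.B φs‖ ^ 2 + ‖A.b (n + 1) - qs‖ ^ 2 ≤ R := by
  obtain ⟨a, ha⟩ := (A.tendsto_energy_and_dissipation hsad).1
  obtain ⟨R, hR⟩ := ha.isBoundedUnder_le
  exact ⟨R, (eventually_map.1 hR).mono fun n hn => (A.energy_lower_bound μs n).trans hn⟩

theorem isBigO_μ (hsad : IsSaddleMultiplier A.B A.F A.G A.I φs qs μs) :
    A.μ =O[atTop] fun _ => (1 : ℝ) := by
  obtain ⟨R, hR⟩ := A.exists_bound_of_energy hsad
  have hκ := A.coeff_μ_pos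
  refine isBigO_one_of_norm_sub_sq_le μs (R := R / (2 * A.ρ * A.s - 2 * A.ρ ^ 2 / A.c))
    (hR.mono fun n hn => ?_)
  rw [le_div_iff₀' hκ]
  nlinarith [sq_nonneg ‖A.p (n + 1) - A.B φs‖, sq_nonneg ‖A.b (n + 1) - qs‖]

theorem isBigO_p (hsad : IsSaddleMultiplier A.B A.F A.G A.I φs qs μs) :
    A.p =O[atTop] fun _ => (1 : ℝ) := by
  obtain ⟨R, hR⟩ := A.exists_bound_of_energy hsad
  have hκ := A.coeff_μ_pos
  refine isBigO_one_of_norm_sub_sq_le (A.B φs) (R := R) ?_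
  rw [← map_add_atTop_eq_nat 1, eventually_map]
  exact hR.mono fun n hn => by
    nlinarith [mul_nonneg hκ.le (sq_nonneg ‖A.μ n - μs‖), sq_nonneg ‖A.b (n + 1) - qs‖]

theorem isBigO_b (hsad : IsSaddleMultiplier A.B A.F A.G A.I φs qs μs) :
    A.b =O[atTop] fun _ => (1 : ℝ) := by
  obtain ⟨R, hR⟩ := A.exists_bound_of_energy hsad
  have hκ := A.coeff_μ_pos
  refine isBigO_one_of_norm_sub_sq_le qs (R := R) ?_
  rw [← map_add_atTop_eq_nat 1, eventually_map]
  exact hR.mono fun n hn => by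
    nlinarith [mul_nonneg hκ.le (sq_nonneg ‖A.μ n - μs‖), sq_nonneg ‖A.p (n + 1) - A.B φs‖]

theorem tendsto_φ (hsad : IsSaddleMultiplier A.B A.F A.G A.I φs qs μs)
    (hBinj : Function.Injective A.B) (hBrange : IsClosed (Set.range A.B))
    (hG : UniformlyConvexOnBoundedSets A.G) : Tendsto A.φ atTop (𝓝 φs) := by
  obtain ⟨K, hK⟩ := A.B.antilipschitz_of_injective_of_isClosed_range hBinj hBrange
  have hBφ : (fun n => A.B (A.φ n)) =O[atTop] fun _ => (1 : ℝ) :=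
    (((A.tendsto_resP hsad).isBigO_one ℝ).add (A.isBigO_p hsad)).congr_left fun n => by
      simp [resP]
  have hφ : A.φ =O[atTop] fun _ => (1 : ℝ) :=
    (IsBigO.of_bound K (.of_forall fun n => hK.le_mul_norm (map_zero A.B) (A.φ n))).trans hBφ
  exact hG.tendsto_of_inner_sub_sub_tendsto_zero hφ (.of_forall A.isSubgradient_G) hsad.1
    ((tendsto_add_atTop_iff_nat 1).1 (A.tendsto_dissipation_summands hsad).2.2.1)

theorem tendsto_q (hsad : IsSaddleMultiplier A.B A.F A.G A.I φs qs μs)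
    (hF : UniformlyConvexOnBoundedSets A.F) : Tendsto A.q atTop (𝓝 qs) := by
  have hq : A.q =O[atTop] fun _ => (1 : ℝ) :=
    ((A.isBigO_b hsad).sub ((A.tendsto_resB hsad).isBigO_one ℝ)).congr_left fun n => by
      simp [resB]
  exact hF.tendsto_of_inner_sub_sub_tendsto_zero hq (.of_forall A.isSubgradient_F) hsad.2.1
    ((tendsto_add_atTop_iff_nat 1).1 (A.tendsto_dissipation_summands hsad).2.2.2.1)

theorem tendsto_p (hsad : IsSaddleMultiplier A.B A.F A.G A.I φs qs μs)
    (hφ : Tendsto A.φ atTop (𝓝 φs)) : Tendsto A.p atTop (𝓝 (A.B φs)) := by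
  simpa [resP] using ((A.B.continuous.tendsto φs).comp hφ).sub (A.tendsto_resP hsad)

theorem tendsto_b (hsad : IsSaddleMultiplier A.B A.F A.G A.I φs qs μs)
    (hq : Tendsto A.q atTop (𝓝 qs)) : Tendsto A.b atTop (𝓝 qs) := by
  simpa [resB] using hq.add (A.tendsto_resB hsad)

theorem tendsto_gradI (hsad : IsSaddleMultiplier A.B A.F A.G A.I φs qs μs)
    (hφ : Tendsto A.φ atTop (𝓝 φs)) (hq : Tendsto A.q atTop (𝓝 qs)) :
    Tendsto A.gradI atTop (𝓝 (A.B φs - qs)) := by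
  have hp := (tendsto_add_atTop_iff_nat 1).2 (A.tendsto_p hsad hφ)
  have hb := (tendsto_add_atTop_iff_nat 1).2 (A.tendsto_b hsad hq)
  have h := (((hp.sub hb).add (A.tendsto_resP hsad)).add (A.tendsto_resB hsad)).sub
    ((A.tendsto_μ_succ_sub hsad).const_smul (2 * A.s))
  rw [add_zero, add_zero, smul_zero, sub_zero] at h
  exact h

theorem exists_tendsto_norm_μ_sub (hsad : IsSaddleMultiplier A.B A.F A.G A.I φs qs μs)
    (hφ : Tendsto A.φ atTop (𝓝 φs)) (hq : Tendsto A.q atTop (𝓝 qs)) {z : H}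
    (hz : IsSaddleMultiplier A.B A.F A.G A.I φs qs z) :
    ∃ a, Tendsto (fun n => ‖A.μ n - z‖) atTop (𝓝 a) := by
  obtain ⟨a, ha⟩ := (A.tendsto_energy_and_dissipation hz).1
  have hμz : (fun n => A.μ n - z) =O[atTop] fun _ => (1 : ℝ) :=
    (A.isBigO_μ hsad).sub (isBigO_const_const z one_ne_zero _)
  have hres := tendsto_inner_zero_of_isBigO_one hμz
    (by simpa using (A.tendsto_resP hsad).add (A.tendsto_resB hsad))
  have hp := ((tendsto_add_atTop_iff_nat 1).2 (A.tendsto_p hsad hφ)).sub_const (A.B φs)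
  have hb := ((tendsto_add_atTop_iff_nat 1).2 (A.tendsto_b hsad hq)).sub_const qs
  have hrest : Tendsto (fun n => A.energy φs qs z n - 2 * A.ρ * A.s * ‖A.μ n - z‖ ^ 2)
      atTop (𝓝 0) := by
    have := (((hres.const_mul (2 * A.ρ)).add (hp.norm.pow 2)).add (hb.norm.pow 2)).add
      ((((A.tendsto_resP hsad).norm.pow 2).add ((A.tendsto_resB hsad).norm.pow 2)).const_mul A.c)
    simpa using this.congr fun n => by rw [energy]; ring
  have hρs : 2 * A.ρ * A.s ≠ 0 := by have := A.ρ_pos; have := A.s_pos; positivity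
  have hsq : Tendsto (fun n => ‖A.μ n - z‖ ^ 2) atTop (𝓝 (a / (2 * A.ρ * A.s))) := by
    have := (ha.sub hrest).div_const (2 * A.ρ * A.s)
    rw [sub_zero] at this
    exact this.congr fun n => by rw [sub_sub_cancel, mul_div_cancel_left₀ _ hρs]
  exact ⟨_, by simpa using hsq.sqrt⟩

theorem isSaddleMultiplier_of_weakTendsto (hsad : IsSaddleMultiplier A.B A.F A.G A.I φs qs μs)
    (hφ : Tendsto A.φ atTop (𝓝 φs)) (hq : Tendsto A.q atTop (𝓝 qs))
    (hI : ConvexOn ℝ Set.univ A.I) (hIlsc : LowerSemicontinuous A.I) (U : Ultrafilter ℕ)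
    (hU : (U : Filter ℕ) ≤ atTop) {z : H} (hz : WeakTendsto A.μ U z) :
    IsSaddleMultiplier A.B A.F A.G A.I φs qs z := by
  have hμ := (A.isBigO_μ hsad).mono hU
  have hP := (A.tendsto_resP hsad).mono_left hU
  have hB := (A.tendsto_resB hsad).mono_left hU
  refine ⟨?_, ?_, ?_⟩
  · refine IsSubgradient.of_tendsto_of_weakTendsto (.of_forall A.isSubgradient_G) hsad.1
      (hφ.mono_left hU) ?_ ?_
    · have h := (hz.add_tendsto (hP.const_smul A.k)).map (-(A.B†))
      rw [smul_zero, add_zero, neg_apply] at h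
      exact h
    · exact ((-(A.B†)).isBigO_comp _ _).trans (hμ.add ((hP.const_smul A.k).isBigO_one ℝ))
  · refine IsSubgradient.of_tendsto_of_weakTendsto (.of_forall A.isSubgradient_F) hsad.2.1
      (hq.mono_left hU) ?_ (hμ.add ((hB.const_smul A.k).isBigO_one ℝ))
    have h := hz.add_tendsto (hB.const_smul A.k)
    rw [smul_zero, add_zero] at h
    exact h
  · refine hI.isSubgradient_of_weakTendsto hIlsc (x := fun n => A.μ (n + 1))
      (.of_forall A.isSubgradient_I) ?_ ?_ ((A.tendsto_gradI hsad hφ hq).mono_left hU)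
    · simpa using hz.add_tendsto ((A.tendsto_μ_succ_sub hsad).mono_left hU)
    · exact ((A.isBigO_μ hsad).comp_tendsto (tendsto_add_atTop_nat 1)).mono hU

theorem exists_weakTendsto_μ (hsad : IsSaddleMultiplier A.B A.F A.G A.I φs qs μs)
    (hφ : Tendsto A.φ atTop (𝓝 φs)) (hq : Tendsto A.q atTop (𝓝 qs))
    (hI : ConvexOn ℝ Set.univ A.I) (hIlsc : LowerSemicontinuous A.I) :
    ∃ z, IsSaddleMultiplier A.B A.F A.G A.I φs qs z ∧ WeakTendsto A.μ atTop z :=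
  exists_weakTendsto_of_tendsto_norm_sub (S := {z | IsSaddleMultiplier A.B A.F A.G A.I φs qs z})
    (A.isBigO_μ hsad) (fun _ hz => A.exists_tendsto_norm_μ_sub hsad hφ hq hz)
    fun U _ hU hz => A.isSaddleMultiplier_of_weakTendsto hsad hφ hq hI hIlsc U hU hz

theorem tendsto_μ (hsad : IsSaddleMultiplier A.B A.F A.G A.I φs qs μs)
    (hI : UniformlyConvexOnBoundedSets A.I) : Tendsto A.μ atTop (𝓝 μs) :=
  (tendsto_add_atTop_iff_nat 1).1 <| hI.tendsto_of_inner_sub_sub_tendsto_zero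
    ((A.isBigO_μ hsad).comp_tendsto (tendsto_add_atTop_nat 1)) (.of_forall A.isSubgradient_I)
    hsad.2.2 (A.tendsto_dissipation_summands hsad).2.2.2.2

end Convergence

noncomputable def ofIterates (B : V →L[ℝ] H) (F : H → ℝ) (G : V → ℝ) (I : H → ℝ) (r s ρ c : ℝ)
    (φ : ℕ → V) (q μ p b ν η : ℕ → H) (hs : 0 < s) (hρ : 0 < ρ) (hcs : ρ < c * s)
    (hc : c < 2 * ρ * (r + 1 / s) - ρ ^ 2 * (r + 1 / s) ^ 2)
    (hi : ∀ n, 1 ≤ n → ∀ μ' : H,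
      I μ' - I (μ n) + ⟪μ n - μ', p n - b n⟫ - s * ⟪μ n - μ', μ n - ν (n-1)⟫
        - s * ⟪μ n - μ', μ n - η (n-1)⟫ ≥ 0)
    (hii : ∀ n, 1 ≤ n →
      ν n = s⁻¹ • (B (φ n) - p n) + μ n ∧ η n = s⁻¹ • (b n - q n) + μ n)
    (hiii : ∀ n, 1 ≤ n → ∀ φ' : V,
      G φ' - G (φ n) + ⟪ν n + r • (B (φ n) - p n), B φ' - B (φ n)⟫ ≥ 0)
    (hiv : ∀ n, 1 ≤ n → ∀ q' : H,
      F q' - F (q n) + ⟪η n + r • (b n - q n), q n - q'⟫ ≥ 0)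
    (hv : ∀ n, 1 ≤ n →
      p (n+1) = p n + (ρ * (r + 1/s)) • (B (φ n) - p n) ∧
      b (n+1) = b n - (ρ * (r + 1/s)) • (b n - q n)) :
    Algorithm1Run V H where
  B := B
  F := F
  G := G
  I := I
  s := s
  k := r + 1 / s
  ρ := ρ
  c := c
  φ n := φ (n + 1)
  q n := q (n + 1)
  μ n := μ (n + 1)
  p n := p (n + 1)
  b n := b (n + 1)
  s_pos := hs
  ρ_pos := hρ
  ρ_lt_c_mul_s := hcs
  c_lt := hc
  isSubgradient_G n z := by
    have h := hiii (n + 1) le_add_self z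
    rw [(hii (n + 1) le_add_self).1,
      show ∀ x y : H, s⁻¹ • x + y + r • x = y + (r + 1 / s) • x from fun x y => by module] at h
    rw [inner_neg_left, ContinuousLinearMap.adjoint_inner_left, map_sub]
    linarith
  isSubgradient_F n z := by
    have h := hiv (n + 1) le_add_self z
    rw [(hii (n + 1) le_add_self).2,
      show ∀ x y : H, s⁻¹ • x + y + r • x = y + (r + 1 / s) • x from fun x y => by module] at h
    rw [← neg_sub z, inner_neg_right] at h
    linarith
  isSubgradient_I n z := by
    have h := hi (n + 1 + 1) le_add_self z
    rw [show n + 1 + 1 - 1 = n + 1 from rfl, (hii (n + 1) le_add_self).1,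
      (hii (n + 1) le_add_self).2, ← real_inner_smul_right, ← real_inner_smul_right] at h
    have e : p (n + 1 + 1) - b (n + 1 + 1)
        - s • (μ (n + 1 + 1) - (s⁻¹ • (B (φ (n + 1)) - p (n + 1)) + μ (n + 1)))
        - s • (μ (n + 1 + 1) - (s⁻¹ • (b (n + 1) - q (n + 1)) + μ (n + 1)))
        = p (n + 1 + 1) - b (n + 1 + 1) + (B (φ (n + 1)) - p (n + 1)) + (b (n + 1) - q (n + 1))
          - (2 * s) • (μ (n + 1 + 1) - μ (n + 1)) := by
      simp only [smul_sub, smul_add, smul_smul, mul_inv_cancel₀ hs.ne', one_smul]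
      module
    rw [sub_sub, add_sub_assoc, ← inner_add_right, ← inner_sub_right, ← sub_sub, e,
      ← neg_sub z, inner_neg_left, real_inner_comm] at h
    linarith
  p_succ n := (hv (n + 1) le_add_self).1
  b_succ n := (hv (n + 1) le_add_self).2

end Algorithm1Run

theorem algorithm1_multiplier_convergence_general
    {V H : Type*} [NormedAddCommGroup V] [InnerProductSpace ℝ V] [CompleteSpace V]
    [NormedAddCommGroup H] [InnerProductSpace ℝ H] [CompleteSpace H]
    (B : V →L[ℝ] H) (F : H → ℝ) (G : V → ℝ) (I : H → ℝ)
    (hIconv : ConvexOn ℝ Set.univ I) (hIlsc : LowerSemicontinuous I)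
    (L : V → H → H → ℝ)
    (hL : ∀ (φ' : V) (q' μ' : H), L φ' q' μ' = F q' + G φ' - I μ' + ⟪μ', B φ' - q'⟫)
    (r s ρ : ℝ) (hs : 0 < s)
    (hρ1 : 0 < ρ) (hρ2 : ρ < (2*r*s^2 + s) / (1 + r*s)^2)
    (φs : V) (qs μs : H)
    (hsaddle : ∀ (φ' : V) (q' μ' : H), L φs qs μ' ≤ L φs qs μs ∧ L φs qs μs ≤ L φ' q' μs)
    (φ : ℕ → V) (q μ p b ν η : ℕ → H)
    (hi : ∀ n, 1 ≤ n → ∀ μ' : H,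
      I μ' - I (μ n) + ⟪μ n - μ', p n - b n⟫ - s * ⟪μ n - μ', μ n - ν (n-1)⟫
        - s * ⟪μ n - μ', μ n - η (n-1)⟫ ≥ 0)
    (hii : ∀ n, 1 ≤ n →
      ν n = s⁻¹ • (B (φ n) - p n) + μ n ∧ η n = s⁻¹ • (b n - q n) + μ n)
    (hiii : ∀ n, 1 ≤ n → ∀ φ' : V,
      G φ' - G (φ n) + ⟪ν n + r • (B (φ n) - p n), B φ' - B (φ n)⟫ ≥ 0)
    (hiv : ∀ n, 1 ≤ n → ∀ q' : H,
      F q' - F (q n) + ⟪η n + r • (b n - q n), q n - q'⟫ ≥ 0)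
    (hv : ∀ n, 1 ≤ n →
      p (n+1) = p n + (ρ * (r + 1/s)) • (B (φ n) - p n) ∧
      b (n+1) = b n - (ρ * (r + 1/s)) • (b n - q n))
    (hBinj : Function.Injective B) (hBrange : IsClosed (Set.range B))
    (hGuc : UniformlyConvexOnBoundedSets G) (hFuc : UniformlyConvexOnBoundedSets F) :
    (∃ μhat : H,
      (∀ v : H, Tendsto (fun n => ⟪μ n, v⟫) atTop (nhds ⟪μhat, v⟫)) ∧
      (∀ v : H, Tendsto (fun n => ⟪ν n, v⟫) atTop (nhds ⟪μhat, v⟫)) ∧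
      (∀ v : H, Tendsto (fun n => ⟪η n, v⟫) atTop (nhds ⟪μhat, v⟫)) ∧
      (∀ (φ' : V) (q' μ' : H), L φs qs μ' ≤ L φs qs μhat ∧ L φs qs μhat ≤ L φ' q' μhat)) ∧
    (UniformlyConvexOnBoundedSets I →
      Tendsto μ atTop (nhds μs) ∧ Tendsto ν atTop (nhds μs) ∧
      Tendsto η atTop (nhds μs)) := by
  obtain ⟨c, hcs, hc⟩ := exists_weight_between hs hρ1 hρ2
  let A := Algorithm1Run.ofIterates B F G I r s ρ c φ q μ p b ν η hs hρ1 hcs hc hi hii hiii hiv hv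
  have hsad : IsSaddleMultiplier A.B A.F A.G A.I φs qs μs := (isSaddleMultiplier_iff hL).1 hsaddle
  have hφ := A.tendsto_φ hsad hBinj hBrange hGuc
  have hq := A.tendsto_q hsad hFuc
  have hPs := (A.tendsto_resP hsad).const_smul s⁻¹
  have hBs := (A.tendsto_resB hsad).const_smul s⁻¹
  rw [smul_zero] at hPs hBs
  have hν : ∀ n, ν (n + 1) = A.μ n + s⁻¹ • A.resP n := fun n => by
    rw [(hii (n + 1) le_add_self).1, add_comm]; rfl
  have hη : ∀ n, η (n + 1) = A.μ n + s⁻¹ • A.resB n := fun n => by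
    rw [(hii (n + 1) le_add_self).2, add_comm]; rfl
  obtain ⟨μhat, hμhat, hweak⟩ := A.exists_weakTendsto_μ hsad hφ hq hIconv hIlsc
  refine ⟨⟨μhat, fun v => ?_, fun v => ?_, fun v => ?_, (isSaddleMultiplier_iff hL).2 hμhat⟩,
    fun hIuc => ?_⟩
  · exact (tendsto_add_atTop_iff_nat 1).1 (hweak v)
  · refine (tendsto_add_atTop_iff_nat 1).1 ?_
    simpa only [hν, add_zero] using hweak.add_tendsto hPs v
  · refine (tendsto_add_atTop_iff_nat 1).1 ?_
    simpa only [hη, add_zero] using hweak.add_tendsto hBs v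
  · have hμ := A.tendsto_μ hsad hIuc
    refine ⟨(tendsto_add_atTop_iff_nat 1).1 hμ, (tendsto_add_atTop_iff_nat 1).1 ?_,
      (tendsto_add_atTop_iff_nat 1).1 ?_⟩
    · simpa only [hν, add_zero] using hμ.add hPs
    · simpa only [hη, add_zero] using hμ.add hBs

/-- For Algorithm-1 iterates (B injective, closed range, G and F
uniformly convex on bounded sets): (μⁿ), (νⁿ) and (ηⁿ) converge weakly to a common
limit μ̂ with (φ*, q*, μ̂) a saddle point of L; if in addition I is uniformly convex
on bounded subsets of H, then (μⁿ), (νⁿ) and (ηⁿ) converge strongly to μ*. -/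
theorem algorithm1_multiplier_convergence
    {V H : Type*} [NormedAddCommGroup V] [InnerProductSpace ℝ V] [CompleteSpace V]
    [NormedAddCommGroup H] [InnerProductSpace ℝ H] [CompleteSpace H]
    (B : V →L[ℝ] H) (F : H → ℝ) (G : V → ℝ) (I : H → ℝ)
    (hFconv : ConvexOn ℝ Set.univ F) (hFlsc : LowerSemicontinuous F)
    (hGconv : ConvexOn ℝ Set.univ G) (hGlsc : LowerSemicontinuous G)
    (hIconv : ConvexOn ℝ Set.univ I) (hIlsc : LowerSemicontinuous I)
    (L : V → H → H → ℝ)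
    (hL : ∀ (φ' : V) (q' μ' : H), L φ' q' μ' = F q' + G φ' - I μ' + ⟪μ', B φ' - q'⟫)
    (r s ρ : ℝ) (hr : 0 < r) (hs : 0 < s)
    (hρ1 : 0 < ρ) (hρ2 : ρ < (2*r*s^2 + s) / (1 + r*s)^2)
    (φs : V) (qs μs : H) (ps bs : H) (hps : ps = B φs) (hbs : bs = qs)
    (hsaddle : ∀ (φ' : V) (q' μ' : H), L φs qs μ' ≤ L φs qs μs ∧ L φs qs μs ≤ L φ' q' μs)
    (φ : ℕ → V) (q μ p b ν η : ℕ → H)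
    (hi : ∀ n, 1 ≤ n → ∀ μ' : H,
      I μ' - I (μ n) + ⟪μ n - μ', p n - b n⟫ - s * ⟪μ n - μ', μ n - ν (n-1)⟫
        - s * ⟪μ n - μ', μ n - η (n-1)⟫ ≥ 0)
    (hii : ∀ n, 1 ≤ n →
      ν n = s⁻¹ • (B (φ n) - p n) + μ n ∧ η n = s⁻¹ • (b n - q n) + μ n)
    (hiii : ∀ n, 1 ≤ n → ∀ φ' : V,
      G φ' - G (φ n) + ⟪ν n + r • (B (φ n) - p n), B φ' - B (φ n)⟫ ≥ 0)
    (hiv : ∀ n, 1 ≤ n → ∀ q' : H,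
      F q' - F (q n) + ⟪η n + r • (b n - q n), q n - q'⟫ ≥ 0)
    (hv : ∀ n, 1 ≤ n →
      p (n+1) = p n + (ρ * (r + 1/s)) • (B (φ n) - p n) ∧
      b (n+1) = b n - (ρ * (r + 1/s)) • (b n - q n))
    (hBinj : Function.Injective B) (hBrange : IsClosed (Set.range B))
    (hGuc : UniformlyConvexOnBoundedSets G) (hFuc : UniformlyConvexOnBoundedSets F) :
    (∃ μhat : H,
      (∀ v : H, Tendsto (fun n => ⟪μ n, v⟫) atTop (nhds ⟪μhat, v⟫)) ∧
      (∀ v : H, Tendsto (fun n => ⟪ν n, v⟫) atTop (nhds ⟪μhat, v⟫)) ∧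
      (∀ v : H, Tendsto (fun n => ⟪η n, v⟫) atTop (nhds ⟪μhat, v⟫)) ∧
      (∀ (φ' : V) (q' μ' : H), L φs qs μ' ≤ L φs qs μhat ∧ L φs qs μhat ≤ L φ' q' μhat)) ∧
    (UniformlyConvexOnBoundedSets I →
      Tendsto μ atTop (nhds μs) ∧ Tendsto ν atTop (nhds μs) ∧
      Tendsto η atTop (nhds μs)) :=
  algorithm1_multiplier_convergence_general B F G I hIconv hIlsc L hL r s ρ hs hρ1 hρ2 φs qs μs
    hsaddle φ q μ p b ν η hi hii hiii hiv hv hBinj hBrange hGuc hFuc
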